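/- arXiv:1708.00059 — 5 statements merged into one kernel-verified Lean document; each statement's English description precedes it below -/
import Mathlib

section
/- Let A be a (k-1)×(k-1) real positive definite matrix with entries a_{ij}, and let B = A^{-1}. Then (tr(B) + 1ᵀ B 1) · ( (Σ_{i} a_{ii})/k − (Σ_{i≠j} a_{ij})/(k(k−1)) ) ≥ k−1, where 1 is the all-ones column vector of length k−1. -/
/-!
With `B = A⁻¹`, take the `k` pairs of vectors `(wₜ, uₜ)` given by `(𝟙/k, 𝟙)` and
`(eᵢ - 𝟙/k, eᵢ)`. Cauchy–Schwarz for the inner product `⟨x, y⟩ = xᵀAy`, applied to `wₜ` and `B uₜ`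
and summed over `t`, gives `(∑ wₜᵀuₜ)² ≤ (∑ wₜᵀAwₜ) (∑ uₜᵀBuₜ)`. Here `∑ wₜᵀuₜ = k - 1`,
`∑ uₜᵀBuₜ = tr B + 𝟙ᵀB𝟙` and `∑ wₜᵀAwₜ = tr A - 𝟙ᵀA𝟙/k`, which is `k - 1` times the second factor.
-/

open Finset Matrix

namespace Matrix

variable {n : Type*} [Fintype n] [DecidableEq n]

namespace PosDef

variable {A : Matrix n n ℝ}

/-- `(w - l • A⁻¹ *ᵥ u) ⬝ᵥ A *ᵥ (w - l • A⁻¹ *ᵥ u) ≥ 0`, expanded in the shape `discrim_le_zero`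
expects. -/
theorem quadratic_inv_mulVec_nonneg (hA : A.PosDef) (w u : n → ℝ) (l : ℝ) :
    0 ≤ (u ⬝ᵥ A⁻¹ *ᵥ u) * (l * l) + -2 * (w ⬝ᵥ u) * l + w ⬝ᵥ A *ᵥ w := by
  have hAinv : A *ᵥ (A⁻¹ *ᵥ u) = u := by
    rw [mulVec_mulVec, mul_nonsing_inv _ hA.det_pos.ne'.isUnit, one_mulVec]
  have hsymm : Aᵀ = A := by
    rw [← conjTranspose_eq_transpose_of_trivial]; exact hA.isHermitian
  have hcross : (A⁻¹ *ᵥ u) ⬝ᵥ A *ᵥ w = w ⬝ᵥ u := by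
    rw [dotProduct_mulVec, ← mulVec_transpose, hsymm, hAinv, dotProduct_comm]
  have h := hA.posSemidef.dotProduct_mulVec_nonneg (w - l • A⁻¹ *ᵥ u)
  simp only [star_trivial, mulVec_sub, mulVec_smul, hAinv, sub_dotProduct, dotProduct_sub,
    smul_dotProduct, dotProduct_smul, hcross, smul_eq_mul] at h
  rw [dotProduct_comm (A⁻¹ *ᵥ u) u] at h
  linarith

theorem sum_dotProduct_sq_le {ι : Type*} [Fintype ι] (hA : A.PosDef) (w u : ι → n → ℝ) :
    (∑ t, w t ⬝ᵥ u t) ^ 2 ≤ (∑ t, w t ⬝ᵥ A *ᵥ w t) * ∑ t, u t ⬝ᵥ A⁻¹ *ᵥ u t := by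
  have hquad : discrim (∑ t, u t ⬝ᵥ A⁻¹ *ᵥ u t) (-2 * ∑ t, w t ⬝ᵥ u t)
      (∑ t, w t ⬝ᵥ A *ᵥ w t) ≤ 0 := discrim_le_zero fun l => by
    simpa only [sum_add_distrib, ← sum_mul, ← mul_sum] using
      sum_nonneg fun t _ => hA.quadratic_inv_mulVec_nonneg (w t) (u t) l
  rw [discrim] at hquad
  linarith

end PosDef

def onesOrSingle : Option n → n → ℝ
  | none => 1
  | some i => Pi.single i 1

def centeredOnesOrSingle (c : ℝ) : Option n → n → ℝ
  | none => c • 1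
  | some i => Pi.single i 1 - c • 1

theorem sum_onesOrSingle_dotProduct_mulVec (B : Matrix n n ℝ) :
    ∑ t, onesOrSingle t ⬝ᵥ B *ᵥ onesOrSingle t = B.trace + ∑ i, ∑ j, B i j := by
  simp only [onesOrSingle, Fintype.sum_option, one_dotProduct, mulVec, dotProduct_one,
    mulVec_single, MulOpposite.op_one, one_smul, single_dotProduct, col_apply, one_mul, add_comm,
    trace, diag_apply]

theorem sum_centeredOnesOrSingle_dotProduct (c : ℝ) :
    ∑ t : Option n, centeredOnesOrSingle c t ⬝ᵥ onesOrSingle t = Fintype.card n := by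
  simp only [centeredOnesOrSingle, onesOrSingle, Fintype.sum_option, smul_dotProduct,
    one_dotProduct_one, smul_eq_mul, dotProduct_single, Pi.sub_apply, Pi.single_eq_same,
    Pi.smul_apply, Pi.one_apply, mul_one, sum_sub_distrib, sum_const, card_univ, nsmul_eq_mul]
  ring

theorem sum_centeredOnesOrSingle_dotProduct_mulVec (A : Matrix n n ℝ) (c : ℝ) :
    ∑ t, centeredOnesOrSingle c t ⬝ᵥ A *ᵥ centeredOnesOrSingle c t
      = A.trace + ((Fintype.card n + 1) * c ^ 2 - 2 * c) * ∑ i, ∑ j, A i j := by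
  simp only [centeredOnesOrSingle, Fintype.sum_option, mulVec_smul, dotProduct_smul,
    smul_dotProduct, one_dotProduct, mulVec, dotProduct_one, smul_eq_mul, mulVec_sub,
    mulVec_single, MulOpposite.op_one, one_smul, dotProduct_sub, sub_dotProduct,
    single_dotProduct, col_apply, one_mul, sum_sub_distrib, trace, diag_apply]
  rw [← mul_sum, ← mul_sum, sum_sub_distrib, sum_const, card_univ, nsmul_eq_mul,
    sum_comm (f := fun i j => A i j)]
  ring

theorem PosDef.card_sq_le_mul_trace_inv_add_sum {A : Matrix n n ℝ} (hA : A.PosDef) :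
    (Fintype.card n : ℝ) ^ 2 ≤ (A.trace - (∑ i, ∑ j, A i j) / (Fintype.card n + 1)) *
      (A⁻¹.trace + ∑ i, ∑ j, A⁻¹ i j) := by
  have h := hA.sum_dotProduct_sq_le (centeredOnesOrSingle (Fintype.card n + 1)⁻¹) onesOrSingle
  rw [sum_centeredOnesOrSingle_dotProduct, sum_onesOrSingle_dotProduct_mulVec,
    sum_centeredOnesOrSingle_dotProduct_mulVec] at h
  convert h using 3
  field_simp
  ring

theorem sum_offDiag_eq_sum_sub_trace {α : Type*} [AddCommGroup α] (A : Matrix n n α) :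
    ∑ i, ∑ j ∈ univ.filter (fun j => j ≠ i), A i j = ∑ i, ∑ j, A i j - A.trace := by
  rw [trace, ← sum_sub_distrib]
  refine sum_congr rfl fun i _ => ?_
  rw [filter_ne', sum_erase_eq_sub (mem_univ i), diag_apply]

end Matrix

theorem trace_inv_bound (k : ℕ) (hk : 2 ≤ k)
    (A : Matrix (Fin (k - 1)) (Fin (k - 1)) ℝ) (hA : A.PosDef)
    (B : Matrix (Fin (k - 1)) (Fin (k - 1)) ℝ) (hB : B = A⁻¹) :
    (B.trace + ∑ i, ∑ j, B i j) *
      ((∑ i, A i i) / (k : ℝ) -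
        (∑ i, ∑ j ∈ univ.filter (fun j => j ≠ i), A i j) / ((k : ℝ) * ((k : ℝ) - 1)))
      ≥ (k : ℝ) - 1 := by
  subst hB
  have hcard : (Fintype.card (Fin (k - 1)) : ℝ) = k - 1 := by
    rw [Fintype.card_fin, Nat.cast_sub (by omega), Nat.cast_one]
  have hk1 : (0 : ℝ) < k - 1 := by
    have : (2 : ℝ) ≤ k := by exact_mod_cast hk
    linarith
  have h := hA.card_sq_le_mul_trace_inv_add_sum
  rw [hcard, sub_add_cancel] at h
  have hsecond : (∑ i, A i i) / (k : ℝ) -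
      (∑ i, ∑ j ∈ univ.filter (fun j => j ≠ i), A i j) / ((k : ℝ) * ((k : ℝ) - 1))
        = (A.trace - (∑ i, ∑ j, A i j) / k) / (k - 1) := by
    rw [sum_offDiag_eq_sum_sub_trace]
    simp only [trace, diag_apply]
    field_simp
    ring
  rw [hsecond, ge_iff_le, mul_div_assoc', le_div_iff₀ hk1, ← sq, mul_comm]
  exact h
end

section
/- Let λ₁,...,λ_m and α₁,...,α_m be reals with λᵢ > 0 and 0 ≤ αᵢ² ≤ k−1 for all i, where m = k−1 and Σᵢ αᵢ² = k−1. Then (Σᵢ (1+αᵢ²)/λᵢ) · (Σᵢ λᵢ(k−αᵢ²)) ≥ k(k−1)². -/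
open Finset

theorem cauchy_schwarz_eig_bound (k : ℕ) (hk : 2 ≤ k)
    (lam α : Fin (k - 1) → ℝ) (hlam : ∀ i, 0 < lam i)
    (hα : ∀ i, 0 ≤ (α i)^2 ∧ (α i)^2 ≤ (k : ℝ) - 1)
    (hsum : ∑ i, (α i)^2 = (k : ℝ) - 1) :
    (∑ i, (1 + (α i)^2) / lam i) * (∑ i, lam i * ((k : ℝ) - (α i)^2))
      ≥ (k : ℝ) * ((k : ℝ) - 1)^2 := by
  have hk1 : (1:ℝ) ≤ (k:ℝ) := by exact_mod_cast Nat.one_le_of_lt hk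
  set f : Fin (k-1) → ℝ := fun i => Real.sqrt ((1 + (α i)^2) / lam i)
  set g : Fin (k-1) → ℝ := fun i => Real.sqrt (lam i * ((k:ℝ) - (α i)^2))
  have hf2 : ∀ i, f i ^ 2 = (1 + (α i)^2) / lam i := by
    intro i
    exact Real.sq_sqrt (div_nonneg (by nlinarith [(hα i).1]) (hlam i).le)
  have hg2 : ∀ i, g i ^ 2 = lam i * ((k:ℝ) - (α i)^2) := by
    intro i
    exact Real.sq_sqrt (mul_nonneg (hlam i).le (by nlinarith [(hα i).2]))
  have hcs := Finset.sum_mul_sq_le_sq_mul_sq Finset.univ f g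
  have hfg : ∀ i, Real.sqrt (k:ℝ) ≤ f i * g i := by
    intro i
    have : f i * g i = Real.sqrt ((1 + (α i)^2) / lam i * (lam i * ((k:ℝ) - (α i)^2))) := by
      rw [Real.sqrt_mul (div_nonneg (by nlinarith [(hα i).1]) (hlam i).le)]
    rw [this]
    apply Real.sqrt_le_sqrt
    have hl := hlam i
    rw [div_mul_eq_mul_div, mul_comm (lam i), mul_div_assoc, mul_div_assoc,
      div_self hl.ne', mul_one]
    nlinarith [(hα i).1, (hα i).2]
  have hsumfg : ((k:ℝ)-1) * Real.sqrt (k:ℝ) ≤ ∑ i, f i * g i := by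
    calc ((k:ℝ)-1) * Real.sqrt (k:ℝ) = ∑ _i : Fin (k-1), Real.sqrt (k:ℝ) := by
          rw [Finset.sum_const, Finset.card_univ, Fintype.card_fin, nsmul_eq_mul]
          congr 1
          push_cast [Nat.cast_sub (Nat.one_le_of_lt hk)]
          ring
      _ ≤ ∑ i, f i * g i := Finset.sum_le_sum fun i _ => hfg i
  have hsq : (∑ i, f i * g i)^2 ≤ (∑ i, f i ^ 2) * (∑ i, g i ^ 2) :=
    by simpa [mul_pow] using Finset.sum_mul_sq_le_sq_mul_sq Finset.univ f g
  have h1 : (((k:ℝ)-1) * Real.sqrt (k:ℝ))^2 ≤ (∑ i, f i * g i)^2 := by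
    apply pow_le_pow_left₀ (mul_nonneg (by linarith) (Real.sqrt_nonneg _)) hsumfg
  have h2 : (((k:ℝ)-1) * Real.sqrt (k:ℝ))^2 = (k:ℝ) * ((k:ℝ)-1)^2 := by
    rw [mul_pow, Real.sq_sqrt (by linarith)]; ring
  calc (k:ℝ) * ((k:ℝ)-1)^2 ≤ (∑ i, f i ^ 2) * (∑ i, g i ^ 2) := by
        rw [← h2]; exact le_trans h1 hsq
    _ = (∑ i, (1 + (α i)^2) / lam i) * (∑ i, lam i * ((k:ℝ) - (α i)^2)) := by
        congr 1 <;> apply Finset.sum_congr rfl <;> intro i _ <;> simp [hf2, hg2]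
end

section
/- Let Φ be an s×s positive definite matrix, t ∈ ℝˢ, C ≥ 0, and define h(u) = (u−t)ᵀΦ(u−t) + C. For α ≥ √s and any ũ ∈ ℝˢ, let E(ũ,α) = {u ∈ ℝˢ : √h(u) − √h(ũ) > α}. Then ∫_{E(ũ,α)} exp(−h(u)/2) du / ∫_{ℝˢ} exp(−h(u)/2) du ≤ exp(−(α−√s)²/2). -/
/-!
Writing `q u = (u - t)ᵀ Φ (u - t)`, the factor `exp (-C / 2)` cancels from the ratio, and
`√(h u) - √(h ũ) > α` forces `q u > α²`. For `0 < c ≤ 1` the Chernoff bound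
`exp (-q / 2) ≤ exp (-(1 - c) α² / 2) · exp (-c q / 2)` on `{q > α²}`, together with the scaling
`∫ exp (-c q / 2) = c ^ (-s / 2) ∫ exp (-q / 2)`, bounds the ratio by
`exp (-(1 - c) α² / 2) · c ^ (-s / 2)`. The choice `c = s / α²` and `r ≤ exp (r - 1)` with
`r = α / √s` turn this into `exp (-(α - √s)² / 2)`.
-/

open MeasureTheory Matrix Real

theorem sq_add_lt_of_lt_sqrt_sub_sqrt {α x z : ℝ} (hα : 0 ≤ α) (h : α < √x - √z) :
    α ^ 2 + z < x := by
  have hz : z ≤ √z ^ 2 := by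
    rcases le_or_gt 0 z with hz | hz
    · rw [sq_sqrt hz]
    · nlinarith [sq_nonneg √z]
  have hx : (α + √z) ^ 2 < x := (lt_sqrt (by positivity)).1 (by linarith)
  nlinarith [sqrt_nonneg z]

theorem pow_le_exp_mul_sub_one {r : ℝ} (hr : 0 ≤ r) (n : ℕ) : r ^ n ≤ exp (n * (r - 1)) :=
  calc r ^ n ≤ exp (r - 1) ^ n := pow_le_pow_left₀ hr (by linarith [add_one_le_exp (r - 1)]) n
    _ = exp (n * (r - 1)) := (exp_nat_mul _ _).symm

theorem exp_neg_sq_sub_div_two_mul_pow_le {α : ℝ} (hα : 0 ≤ α) (n : ℕ) :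
    exp (-(α ^ 2 - n) / 2) * (α / √n) ^ n ≤ exp (-(α - √n) ^ 2 / 2) :=
  calc exp (-(α ^ 2 - n) / 2) * (α / √n) ^ n
      ≤ exp (-(α ^ 2 - n) / 2) * exp (n * (α / √n - 1)) := by
        gcongr
        exact pow_le_exp_mul_sub_one (by positivity) n
    _ = exp (-(α - √n) ^ 2 / 2) := by
        rw [← exp_add, mul_sub, ← mul_div_assoc, mul_comm (n : ℝ) α, mul_div_assoc, div_sqrt]
        congr 1
        linear_combination (1 / 2 : ℝ) * sq_sqrt (Nat.cast_nonneg n)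

theorem setIntegral_exp_neg_half_le_of_lt {X : Type*} [MeasurableSpace X] {μ : Measure X}
    {q : X → ℝ} {E : Set X} (hE : MeasurableSet E) {a c : ℝ} (hc : c ≤ 1)
    (hqE : ∀ x ∈ E, a < q x) (hint : Integrable (fun x => exp (-(c * q x) / 2)) μ) :
    ∫ x in E, exp (-q x / 2) ∂μ ≤ exp (-((1 - c) * a) / 2) * ∫ x, exp (-(c * q x) / 2) ∂μ :=
  calc ∫ x in E, exp (-q x / 2) ∂μ
      ≤ ∫ x in E, exp (-((1 - c) * a) / 2) * exp (-(c * q x) / 2) ∂μ := by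
        refine integral_mono_of_nonneg (ae_of_all _ fun _ => (exp_pos _).le)
          ((hint.const_mul _).integrableOn) ((ae_restrict_iff' hE).2 (ae_of_all _ fun x hx => ?_))
        dsimp only
        rw [← exp_add, exp_le_exp]
        nlinarith [hqE x hx]
    _ ≤ exp (-((1 - c) * a) / 2) * ∫ x, exp (-(c * q x) / 2) ∂μ := by
        rw [integral_const_mul]
        exact mul_le_mul_of_nonneg_left
          (setIntegral_le_integral hint (ae_of_all _ fun _ => (exp_pos _).le)) (exp_pos _).le

section QuadraticForm

variable {ι : Type*} [Fintype ι]

theorem Matrix.PosDef.exists_pos_mul_dotProduct_self_le {Φ : Matrix ι ι ℝ} (hΦ : Φ.PosDef) :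
    ∃ μ > 0, ∀ v : ι → ℝ, μ * (v ⬝ᵥ v) ≤ v ⬝ᵥ Φ *ᵥ v := by
  obtain ⟨μ, hμ, hsphere⟩ := (isCompact_sphere (0 : EuclideanSpace ℝ ι) 1).exists_forall_le'
    (f := fun w => w.ofLp ⬝ᵥ Φ *ᵥ w.ofLp) (by fun_prop) (a := 0) fun w hw =>
      hΦ.dotProduct_mulVec_pos (x := w.ofLp) fun hw0 => by
        simp [show w = 0 by ext i; simp [hw0]] at hw
  refine ⟨μ, hμ, fun v => ?_⟩
  rcases eq_or_ne v 0 with rfl | hv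
  · simp
  set r := ‖WithLp.toLp 2 v‖
  have hr : 0 < r := norm_pos_iff.2 (by simpa using hv)
  have hvv : v ⬝ᵥ v = r ^ 2 := by
    rw [EuclideanSpace.real_norm_sq_eq]
    simp [dotProduct, sq]
  have hunit := hsphere (r⁻¹ • WithLp.toLp 2 v) (by simp [norm_smul, r, hr.ne'])
  simp only [WithLp.ofLp_smul, mulVec_smul, smul_dotProduct, dotProduct_smul, smul_eq_mul] at hunit
  rw [hvv]
  field_simp at hunit
  nlinarith

theorem Matrix.PosDef.integrable_exp_neg_mul_dotProduct_mulVec {Φ : Matrix ι ι ℝ}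
    (hΦ : Φ.PosDef) {c : ℝ} (hc : 0 < c) :
    Integrable fun v : ι → ℝ => exp (-(c * (v ⬝ᵥ Φ *ᵥ v)) / 2) := by
  obtain ⟨μ, hμ, hle⟩ := hΦ.exists_pos_mul_dotProduct_self_le
  have hprod : Integrable fun v : ι → ℝ => ∏ i, exp (-(c * μ / 2) * v i ^ 2) :=
    Integrable.fintype_prod (f := fun _ x => exp (-(c * μ / 2) * x ^ 2))
      fun _ => integrable_exp_neg_mul_sq (by positivity)
  refine hprod.mono (by fun_prop) (ae_of_all _ fun v => ?_)
  rw [← exp_sum, norm_of_nonneg (exp_pos _).le, norm_of_nonneg (exp_pos _).le, exp_le_exp,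
    ← Finset.mul_sum]
  have hsum : ∑ i, v i ^ 2 = v ⬝ᵥ v := by simp [dotProduct, sq]
  rw [hsum]
  nlinarith [mul_le_mul_of_nonneg_left (hle v) hc.le]

theorem integral_comp_mul_dotProduct_mulVec {E : Type*} [NormedAddCommGroup E] [NormedSpace ℝ E]
    (Φ : Matrix ι ι ℝ) (g : ℝ → E) {c : ℝ} (hc : 0 ≤ c) :
    ∫ v : ι → ℝ, g (c * (v ⬝ᵥ Φ *ᵥ v)) = (√c ^ Fintype.card ι)⁻¹ • ∫ v : ι → ℝ, g (v ⬝ᵥ Φ *ᵥ v) := by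
  have hsmul : ∀ v : ι → ℝ, c * (v ⬝ᵥ Φ *ᵥ v) = (√c • v) ⬝ᵥ Φ *ᵥ (√c • v) := fun v => by
    rw [mulVec_smul, smul_dotProduct, dotProduct_smul, smul_eq_mul, smul_eq_mul, ← mul_assoc,
      mul_self_sqrt hc]
  simp_rw [hsmul]
  rw [Measure.integral_comp_smul_of_nonneg volume (fun v => g (v ⬝ᵥ Φ *ᵥ v)) √c
    (hR := sqrt_nonneg c), Module.finrank_fintype_fun_eq_card]

theorem Matrix.PosDef.setIntegral_exp_neg_half_le_of_sqrt_card_le {Φ : Matrix ι ι ℝ}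
    (hΦ : Φ.PosDef) (t : ι → ℝ) {α : ℝ} (hα : √(Fintype.card ι) ≤ α) :
    ∫ u in {u | α ^ 2 < (u - t) ⬝ᵥ Φ *ᵥ (u - t)}, exp (-((u - t) ⬝ᵥ Φ *ᵥ (u - t)) / 2) ≤
      exp (-(α - √(Fintype.card ι)) ^ 2 / 2) * ∫ u, exp (-((u - t) ⬝ᵥ Φ *ᵥ (u - t)) / 2) := by
  set n := Fintype.card ι
  set q : (ι → ℝ) → ℝ := fun u => (u - t) ⬝ᵥ Φ *ᵥ (u - t)
  have hI_nonneg : 0 ≤ ∫ u, exp (-q u / 2) := integral_nonneg fun _ => (exp_pos _).le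
  rcases Nat.eq_zero_or_pos n with hn | hn
  · have : IsEmpty ι := Fintype.card_eq_zero_iff.1 hn
    have hempty : {u | α ^ 2 < q u} = ∅ := by
      simp [q, dotProduct_of_isEmpty, (sq_nonneg α).not_gt]
    rw [hempty, Measure.restrict_empty, integral_zero_measure]
    exact mul_nonneg (exp_pos _).le hI_nonneg
  have hn' : (0 : ℝ) < n := by exact_mod_cast hn
  have hα0 : 0 < α := (sqrt_pos.2 hn').trans_le hα
  -- the minimiser of `exp (-(1 - c) α² / 2) * c ^ (-n / 2)`
  set c : ℝ := n / α ^ 2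
  have hc0 : 0 < c := by positivity
  have hc1 : c ≤ 1 :=
    div_le_one_of_le₀ (by nlinarith [sqrt_nonneg n, sq_sqrt hn'.le]) (by positivity)
  have hexponent : (1 - c) * α ^ 2 = α ^ 2 - n := by
    rw [sub_mul, div_mul_cancel₀ _ (by positivity), one_mul]
  have hscale : ∫ u, exp (-(c * q u) / 2) = (α / √n) ^ n * ∫ u, exp (-q u / 2) := by
    simp only [q]
    rw [integral_sub_right_eq_self (fun v => exp (-(c * (v ⬝ᵥ Φ *ᵥ v)) / 2)) t,
      integral_sub_right_eq_self (fun v => exp (-(v ⬝ᵥ Φ *ᵥ v) / 2)) t,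
      integral_comp_mul_dotProduct_mulVec Φ (fun x => exp (-x / 2)) hc0.le, smul_eq_mul,
      sqrt_div hn'.le, sqrt_sq hα0.le, ← inv_pow, inv_div]
  calc ∫ u in {u | α ^ 2 < q u}, exp (-q u / 2)
      ≤ exp (-((1 - c) * α ^ 2) / 2) * ∫ u, exp (-(c * q u) / 2) :=
        setIntegral_exp_neg_half_le_of_lt (measurableSet_lt measurable_const (by fun_prop)) hc1
          (fun _ hu => hu) ((hΦ.integrable_exp_neg_mul_dotProduct_mulVec hc0).comp_sub_right t)
    _ = exp (-(α ^ 2 - n) / 2) * (α / √n) ^ n * ∫ u, exp (-q u / 2) := by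
        rw [hscale, hexponent, mul_assoc]
    _ ≤ exp (-(α - √n) ^ 2 / 2) * ∫ u, exp (-q u / 2) :=
        mul_le_mul_of_nonneg_right (exp_neg_sq_sub_div_two_mul_pow_le hα0.le n) hI_nonneg

end QuadraticForm

theorem gaussian_tail_ratio_general (s : ℕ) (Φ : Matrix (Fin s) (Fin s) ℝ) (hΦ : Φ.PosDef)
    (t : Fin s → ℝ) (C : ℝ)
    (h : (Fin s → ℝ) → ℝ) (hh : ∀ u, h u = (u - t) ⬝ᵥ Φ.mulVec (u - t) + C)
    (α : ℝ) (hα : Real.sqrt s ≤ α) (utilde : Fin s → ℝ) :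
    (∫ u in {u : Fin s → ℝ | Real.sqrt (h u) - Real.sqrt (h utilde) > α},
        Real.exp (-h u / 2)) / (∫ u : Fin s → ℝ, Real.exp (-h u / 2)) ≤
      Real.exp (-(α - Real.sqrt s)^2 / 2) := by
  set q : (Fin s → ℝ) → ℝ := fun u => (u - t) ⬝ᵥ Φ *ᵥ (u - t)
  have hhq : ∀ u, h u = q u + C := hh
  have hq : Integrable fun u => exp (-q u / 2) := by
    simpa only [one_mul] using
      (hΦ.integrable_exp_neg_mul_dotProduct_mulVec one_pos).comp_sub_right t
  have hE : {u | √(h u) - √(h utilde) > α} ⊆ {u | α ^ 2 < q u} := fun u hu => by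
    have hlt := sq_add_lt_of_lt_sqrt_sub_sqrt ((sqrt_nonneg _).trans hα) hu
    have hq_nonneg := hΦ.posSemidef.dotProduct_mulVec_nonneg (utilde - t)
    rw [hhq, hhq] at hlt
    rw [star_trivial] at hq_nonneg
    exact lt_of_add_lt_add_right (hlt.trans_le' (by linarith))
  have hfactor : ∀ u, exp (-h u / 2) = exp (-C / 2) * exp (-q u / 2) := fun u => by
    rw [← exp_add, hhq]
    ring_nf
  simp_rw [hfactor, integral_const_mul]
  rw [mul_div_mul_left _ _ (exp_pos _).ne', div_le_iff₀ (integral_exp_pos hq)]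
  calc _ ≤ ∫ u in {u | α ^ 2 < q u}, exp (-q u / 2) :=
        setIntegral_mono_set hq.integrableOn (ae_of_all _ fun _ => (exp_pos _).le)
          hE.eventuallyLE
    _ ≤ _ := by
        simpa only [Fintype.card_fin] using
          hΦ.setIntegral_exp_neg_half_le_of_sqrt_card_le t (α := α) (by rwa [Fintype.card_fin])

theorem gaussian_tail_ratio (s : ℕ) (Φ : Matrix (Fin s) (Fin s) ℝ) (hΦ : Φ.PosDef)
    (t : Fin s → ℝ) (C : ℝ) (hC : 0 ≤ C)
    (h : (Fin s → ℝ) → ℝ) (hh : ∀ u, h u = (u - t) ⬝ᵥ Φ.mulVec (u - t) + C)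
    (α : ℝ) (hα : Real.sqrt s ≤ α) (utilde : Fin s → ℝ) :
    (∫ u in {u : Fin s → ℝ | Real.sqrt (h u) - Real.sqrt (h utilde) > α},
        Real.exp (-h u / 2)) / (∫ u : Fin s → ℝ, Real.exp (-h u / 2)) ≤
      Real.exp (-(α - Real.sqrt s)^2 / 2) :=
  gaussian_tail_ratio_general s Φ hΦ t C h hh α hα utilde
end

section
/- Let k ≥ 2 and ε > 0, and let q_{i1},...,q_{ik} be positive reals such that q_{ij}/min_{j'} q_{ij'} ∈ {1, e^ε} for all j, and set q_i = (1/k) Σ_j q_{ij}. Let d* = argmin_{1 ≤ d ≤ k−1} (d e^ε + k − d)²/(d(k−d)). Then Σ_{j=1}^k (q_{ij}/q_i)² ≤ k (1 + (e^ε − 1)² · d*(k−d*)/(d* e^ε + k − d*)²). -/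
/-!
Writing `m` for the smallest entry and `E = exp ε`, every entry is `m` or `m * E`; if `d` entries
equal `m * E`, then with `A = d * E + k - d` the mean is `m * A / k` and the left-hand side equals
`k² (d E² + k - d) / A² = k (1 + (E - 1)² d (k - d) / A²)`. So it only remains to maximise
`d (k - d) / A²` over `d ∈ {0, …, k}`: at `d = 0` and `d = k` it vanishes, and in between it is the
reciprocal of the quantity `d*` minimises.
-/

open Finset

theorem sum_comp_eq_of_forall_eq_or_eq {ι : Type*} [Fintype ι] (q : ι → ℝ) (a b : ℝ)
    [DecidablePred (fun j => q j = b)] (hq : ∀ j, q j = a ∨ q j = b) (g : ℝ → ℝ) :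
    ∑ j, g (q j) = #{j | q j = b} * g b + (Fintype.card ι - #{j | q j = b}) * g a := by
  have hcard : (#{j | ¬q j = b} : ℝ) = Fintype.card ι - #{j | q j = b} := by
    rw [eq_sub_iff_add_eq', ← Nat.cast_add, card_filter_add_card_filter_not, card_univ]
  rw [← sum_filter_add_sum_filter_not univ (fun j => q j = b),
    sum_congr rfl fun j hj => congrArg g (mem_filter.1 hj).2,
    sum_congr rfl fun j hj => congrArg g ((hq j).resolve_right (mem_filter.1 hj).2),
    sum_const, sum_const, nsmul_eq_mul, nsmul_eq_mul, hcard]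

theorem two_valued_sum_sq_div_mean_sq {k d m E : ℝ} (hk : k ≠ 0) (hm : m ≠ 0)
    (hA : d * E + k - d ≠ 0) :
    d * (m * E / ((1 / k) * (d * (m * E) + (k - d) * m))) ^ 2 +
        (k - d) * (m / ((1 / k) * (d * (m * E) + (k - d) * m))) ^ 2 =
      k * (1 + (E - 1) ^ 2 * (d * (k - d) / (d * E + k - d) ^ 2)) := by
  have hmean : (1 / k) * (d * (m * E) + (k - d) * m) = m * (d * E + k - d) / k := by
    field_simp; ring
  rw [hmean]
  field_simp
  ring

theorem cast_mul_add_sub_pos {k d : ℕ} {E : ℝ} (hE : 0 < E) (hk : 0 < k) (hd : d ≤ k) :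
    (0 : ℝ) < d * E + k - d := by
  have hdk : (d : ℝ) ≤ k := by exact_mod_cast hd
  have hk' : (0 : ℝ) < k := by exact_mod_cast hk
  rcases le_total 1 E with h | h <;> nlinarith [(Nat.cast_nonneg d : (0 : ℝ) ≤ d)]

theorem cast_mul_sub_div_sq_le_of_minimizer {k d dstar : ℕ} {E : ℝ} (hE : 0 < E) (hd : d ≤ k)
    (hd1 : 1 ≤ dstar) (hd2 : dstar ≤ k - 1)
    (hdmin : ∀ d : ℕ, 1 ≤ d → d ≤ k - 1 →
      ((dstar : ℝ) * E + k - dstar) ^ 2 / ((dstar : ℝ) * (k - dstar)) ≤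
        ((d : ℝ) * E + k - d) ^ 2 / ((d : ℝ) * (k - d))) :
    (d : ℝ) * (k - d) / (d * E + k - d) ^ 2 ≤
      (dstar : ℝ) * (k - dstar) / (dstar * E + k - dstar) ^ 2 := by
  have hdstar_pos : (0 : ℝ) < dstar * (k - dstar) :=
    mul_pos (by exact_mod_cast hd1) (sub_pos.2 (by exact_mod_cast (by omega : dstar < k)))
  rcases Nat.eq_zero_or_pos d with rfl | hd0
  · simp only [CharP.cast_eq_zero, zero_mul, zero_div]
    positivity
  rcases hd.eq_or_lt with rfl | hdk
  · simp only [sub_self, mul_zero, zero_div]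
    positivity
  have hA : (0 : ℝ) < dstar * E + k - dstar := cast_mul_add_sub_pos hE (by omega) (by omega)
  simpa only [inv_div] using inv_anti₀ (by positivity) (hdmin d hd0 (by omega))

theorem sum_sq_ratio_le (k : ℕ) (hk : 2 ≤ k) (ε : ℝ)
    (q : Fin k → ℝ) (hq : ∀ j, 0 < q j)
    (hratio : ∀ j, q j / (Finset.univ.inf' ⟨⟨0, by omega⟩, Finset.mem_univ _⟩ q) = 1 ∨
      q j / (Finset.univ.inf' ⟨⟨0, by omega⟩, Finset.mem_univ _⟩ q) = Real.exp ε)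
    (dstar : ℕ) (hd1 : 1 ≤ dstar) (hd2 : dstar ≤ k - 1)
    (hdmin : ∀ d : ℕ, 1 ≤ d → d ≤ k - 1 →
      ((dstar : ℝ) * Real.exp ε + k - dstar)^2 / ((dstar : ℝ) * (k - dstar)) ≤
        ((d : ℝ) * Real.exp ε + k - d)^2 / ((d : ℝ) * (k - d))) :
    ∑ j, (q j / ((1 / (k : ℝ)) * ∑ j', q j'))^2 ≤
      (k : ℝ) * (1 + (Real.exp ε - 1)^2 *
        ((dstar : ℝ) * ((k : ℝ) - dstar) / ((dstar : ℝ) * Real.exp ε + k - dstar)^2)) := by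
  classical
  set m := univ.inf' ⟨⟨0, by omega⟩, mem_univ _⟩ q
  have hm : 0 < m := (lt_inf'_iff _).2 fun j _ => hq j
  have htwo : ∀ j, q j = m ∨ q j = m * Real.exp ε := fun j =>
    (hratio j).imp (div_eq_one_iff_eq hm.ne').1
      fun h => by rw [(div_eq_iff hm.ne').1 h, mul_comm]
  set d := #{j | q j = m * Real.exp ε}
  have hdk : d ≤ k := (card_filter_le _ _).trans_eq (card_fin k)
  have hA := cast_mul_add_sub_pos (Real.exp_pos ε) (by omega) hdk
  have hsum := sum_comp_eq_of_forall_eq_or_eq q _ _ htwo id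
  simp only [id, Fintype.card_fin] at hsum
  rw [sum_comp_eq_of_forall_eq_or_eq q _ _ htwo fun x => (x / ((1 / (k : ℝ)) * ∑ j', q j')) ^ 2,
    hsum, Fintype.card_fin, two_valued_sum_sq_div_mean_sq (by positivity) hm.ne' hA.ne']
  gcongr (k : ℝ) * (1 + _ * ?_)
  exact cast_mul_sub_div_sq_le_of_minimizer (Real.exp_pos ε) hdk hd1 hd2 hdmin
end

section
/- Let e^ε > 1 and 1 ≤ d ≤ k−1 be an integer. The function f(d) = (d e^ε + k − d)²/(d(k−d)) over real d ∈ (0, k) is minimized at d = k/(e^ε + 1); consequently the integer minimizer d* of f over {1,...,k−1} satisfies d* = ⌈k/(e^ε+1)⌉ or d* = ⌊k/(e^ε+1)⌋. -/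
open Set

lemma f_incr {E kk x y : ℝ} (hE : 1 < E) (hk0 : 0 < kk) (hx : kk/(E+1) ≤ x)
    (hxy : x < y) (hy : y < kk) :
    (x*E + kk - x)^2/(x*(kk-x)) < (y*E + kk - y)^2/(y*(kk-y)) := by
  have hE1 : 0 < E + 1 := by linarith
  have hx0 : 0 < x := lt_of_lt_of_le (div_pos hk0 hE1) hx
  have hy0 : 0 < y := lt_trans hx0 hxy
  have hky : 0 < kk - y := by linarith
  have hkx : 0 < kk - x := by linarith
  have h1 : kk - x ≤ x*E := by
    have := (div_le_iff₀ hE1).mp hx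
    nlinarith
  have h2 : kk - y < y*E := by nlinarith
  have key : (kk-x)*(kk-y) < (x*E)*(y*E) := by nlinarith
  rw [div_lt_div_iff₀ (by positivity) (by positivity)]
  nlinarith [mul_pos (mul_pos hk0 (sub_pos.mpr hxy)) (sub_pos.mpr key)]

lemma f_decr {E kk x y : ℝ} (hE : 1 < E) (hk0 : 0 < kk) (hx : 0 < x)
    (hxy : x < y) (hy : y ≤ kk/(E+1)) :
    (y*E + kk - y)^2/(y*(kk-y)) < (x*E + kk - x)^2/(x*(kk-x)) := by
  have hE1 : 0 < E + 1 := by linarith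
  have hy0 : 0 < y := lt_trans hx hxy
  have hyk : y < kk := by
    have : kk/(E+1) < kk := by
      rw [div_lt_iff₀ hE1]; nlinarith
    linarith
  have hky : 0 < kk - y := by linarith
  have hkx : 0 < kk - x := by linarith
  have h1 : y*E ≤ kk - y := by
    have := (le_div_iff₀ hE1).mp hy
    nlinarith
  have h2 : x*E < kk - x := by nlinarith
  have hyE : 0 < y*E := by positivity
  have key : (x*E)*(y*E) < (kk-x)*(kk-y) := by
    nlinarith [mul_lt_mul_of_pos_right h2 hyE, mul_le_mul_of_nonneg_left h1 (le_of_lt hkx)]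
  rw [div_lt_div_iff₀ (by positivity) (by positivity)]
  nlinarith [mul_pos (mul_pos hk0 (sub_pos.mpr hxy)) (sub_pos.mpr key)]

theorem f_min_at_crit (k : ℕ) (hk : 2 ≤ k) (ε : ℝ) (hε : 0 < ε) :
    (∀ d ∈ Ioo (0 : ℝ) (k : ℝ),
      (((k : ℝ) / (Real.exp ε + 1)) * Real.exp ε + (k : ℝ) - (k : ℝ) / (Real.exp ε + 1))^2 /
          (((k : ℝ) / (Real.exp ε + 1)) * ((k : ℝ) - (k : ℝ) / (Real.exp ε + 1))) ≤
        (d * Real.exp ε + (k : ℝ) - d)^2 / (d * ((k : ℝ) - d))) ∧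
    (∀ dstar : ℕ, 1 ≤ dstar → dstar ≤ k - 1 →
      (∀ d : ℕ, 1 ≤ d → d ≤ k - 1 →
        ((dstar : ℝ) * Real.exp ε + (k : ℝ) - dstar)^2 / ((dstar : ℝ) * ((k : ℝ) - dstar)) ≤
          ((d : ℝ) * Real.exp ε + (k : ℝ) - d)^2 / ((d : ℝ) * ((k : ℝ) - d))) →
      dstar = ⌈(k : ℝ) / (Real.exp ε + 1)⌉₊ ∨ dstar = ⌊(k : ℝ) / (Real.exp ε + 1)⌋₊) := by
  set E := Real.exp ε with hEdef
  have hE : 1 < E := by nlinarith [Real.add_one_lt_exp (ne_of_gt hε)]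
  have hk2 : (2:ℝ) ≤ k := by exact_mod_cast hk
  have hk0 : (0:ℝ) < k := by linarith
  have hE1 : (0:ℝ) < E + 1 := by linarith
  set c := (k:ℝ)/(E+1) with hc
  have hc0 : 0 < c := div_pos hk0 hE1
  have hck : c < (k:ℝ) := by rw [hc, div_lt_iff₀ hE1]; nlinarith
  have hck1 : c ≤ (k:ℝ) - 1 := by rw [hc, div_le_iff₀ hE1]; nlinarith
  constructor
  · intro d hd
    obtain ⟨hd0, hdk⟩ := hd
    have hL : (c*E + (k:ℝ) - c)^2/(c*((k:ℝ)-c)) = 4*E := by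
      have hden : c*((k:ℝ)-c) ≠ 0 := ne_of_gt (mul_pos hc0 (by linarith))
      rw [div_eq_iff hden, hc]
      field_simp
      ring
    rw [hL, le_div_iff₀ (by nlinarith)]
    nlinarith [sq_nonneg (d*E - ((k:ℝ)-d))]
  · intro ds h1s h2s hmin
    have hds1 : (1:ℝ) ≤ ds := by exact_mod_cast h1s
    have hdsk : (ds:ℝ) ≤ (k:ℝ) - 1 := by
      have h : (ds:ℝ) ≤ ((k-1:ℕ):ℝ) := by exact_mod_cast h2s
      rwa [Nat.cast_sub (by omega), Nat.cast_one] at h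
    by_contra hcon
    push_neg at hcon
    obtain ⟨hne1, hne2⟩ := hcon
    have hceil : ⌈c⌉₊ ≤ ⌊c⌋₊ + 1 := Nat.ceil_le_floor_add_one c
    rcases lt_or_ge ds ⌊c⌋₊ with hlt | hge
    · have hm1 : 1 ≤ ⌊c⌋₊ := by omega
      have hmk : ⌊c⌋₊ ≤ k - 1 := by
        have h1 : (⌊c⌋₊:ℝ) < k := lt_of_le_of_lt (Nat.floor_le hc0.le) hck
        have h2 : ⌊c⌋₊ < k := by exact_mod_cast h1
        omega
      have hmin2 := hmin ⌊c⌋₊ hm1 hmk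
      have hdec := f_decr (x:=(ds:ℝ)) (y:=(⌊c⌋₊:ℝ)) hE hk0 (by linarith)
        (by exact_mod_cast hlt) (Nat.floor_le hc0.le)
      linarith
    · have hgt : ⌈c⌉₊ < ds := by omega
      have hc1 : 1 ≤ ⌈c⌉₊ := by
        have := Nat.ceil_pos.mpr hc0; omega
      have hck2 : ⌈c⌉₊ ≤ k - 1 := by
        apply Nat.ceil_le.mpr
        rw [Nat.cast_sub (by omega), Nat.cast_one]
        exact hck1
      have hmin2 := hmin ⌈c⌉₊ hc1 hck2
      have hinc := f_incr (x:=(⌈c⌉₊:ℝ)) (y:=(ds:ℝ)) hE hk0 (Nat.le_ceil c)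
        (by exact_mod_cast hgt) (by linarith)
      linarith
end
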